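/- Let ρ: ℝ → [0,∞] be a proper closed convex function with ρ(0) = 0 satisfying Assumptions 1 and 2, and let 𝔇 := { t ∈ dom ρ : ρ(t) > 0 }. If ρ is strictly convex on 𝔇, then the monotone conjugate ρ⁺(u) := sup_{t ≥ 0} { ut − ρ(t) } is differentiable on (0, ∞). -/

import Mathlib

open Matrix Filter Set Topology

noncomputable section

/-- The quadratic part `2 gᵀ x + xᵀ H x` of the objective. -/
def quadObj {n : ℕ} (g : Fin n → ℝ) (H : Matrix (Fin n) (Fin n) ℝ) (x : Fin n → ℝ) : ℝ :=
  2 * (g ⬝ᵥ x) + x ⬝ᵥ H.mulVec x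

/-- The squared Euclidean norm `‖x‖²`. -/
def nsq {m : Type*} [Fintype m] (x : m → ℝ) : ℝ := x ⬝ᵥ x

/-- The Euclidean norm `‖x‖`. -/
def vnorm {m : Type*} [Fintype m] (x : m → ℝ) : ℝ := Real.sqrt (x ⬝ᵥ x)

/-- `ρ : ℝ → [0,∞]` is proper closed (lsc) convex with `ρ 0 = 0`. -/
def RhoBasic (ρ : ℝ → EReal) : Prop :=
  (∀ t, 0 ≤ ρ t) ∧ ρ 0 = 0 ∧ LowerSemicontinuous ρ ∧
    ∀ a b θ : ℝ, 0 ≤ θ → θ ≤ 1 →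
      ρ (θ * a + (1 - θ) * b) ≤ (θ : EReal) * ρ a + ((1 - θ : ℝ) : EReal) * ρ b

/-- Assumption 1: `ρ` is nondecreasing, vanishes on `(-∞,0]`, finite somewhere on `(0,∞)`. -/
def Assump1 (ρ : ℝ → EReal) : Prop :=
  Monotone ρ ∧ (∀ t ≤ (0:ℝ), ρ t = 0) ∧ ∃ t₀ : ℝ, 0 < t₀ ∧ ρ t₀ < ⊤

/-- Assumption 2: supercoercivity, `lim_{t→∞} ρ(t)/t = ∞`. -/
def Assump2 (ρ : ℝ → EReal) : Prop :=
  ∀ M : ℝ, ∀ᶠ t : ℝ in atTop, ((M * t : ℝ) : EReal) ≤ ρ t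

/-- The monotone conjugate `ρ⁺(u) = sup_{t ≥ 0} (ut − ρ(t))`. -/
def mconj (ρ : ℝ → EReal) (u : ℝ) : EReal :=
  ⨆ t : {t : ℝ // 0 ≤ t}, (((u * (t : ℝ) : ℝ) : EReal) - ρ t)

/-- The real-valued monotone conjugate (under supercoercivity `ρ⁺` is finite). -/
def mconjR (ρ : ℝ → EReal) (u : ℝ) : ℝ := (mconj ρ u).toReal

/-- Assumption 3: `ρ⁺` is differentiable on `(0,∞)`. -/
def Assump3 (ρ : ℝ → EReal) : Prop :=
  ∀ u : ℝ, 0 < u → DifferentiableAt ℝ (mconjR ρ) u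

/-- Convex subdifferential of an `EReal`-valued function on `ℝ`. -/
def subdiff (f : ℝ → EReal) (x : ℝ) : Set ℝ :=
  {s : ℝ | ∀ y : ℝ, f x + ((s * (y - x) : ℝ) : EReal) ≤ f y}

/-- Indicator function `δ_{ℝ₊}` of `[0,∞)`. -/
def indNonneg : ℝ → EReal := fun t => if 0 ≤ t then (0 : EReal) else ⊤

/-- Smallest eigenvalue of a symmetric matrix, via the Rayleigh quotient. -/
def lambdaMin {m : Type*} [Fintype m] (A : Matrix m m ℝ) : ℝ :=
  ⨅ x : {x : m → ℝ // x ⬝ᵥ x = 1}, ((x : m → ℝ) ⬝ᵥ A.mulVec (x : m → ℝ))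

/-- Euclidean operator norm of a matrix. -/
def opNorm {m : Type*} [Fintype m] (A : Matrix m m ℝ) : ℝ :=
  ⨆ x : {x : m → ℝ // x ⬝ᵥ x = 1}, vnorm (A.mulVec (x : m → ℝ))

/-- The bordered matrix `B(t) = [[t, gᵀ],[g, H]]`. -/
def Bmat {n : ℕ} (g : Fin n → ℝ) (H : Matrix (Fin n) (Fin n) ℝ) (t : ℝ) :
    Matrix (Fin (n+1)) (Fin (n+1)) ℝ :=
  Matrix.of (Fin.cons (Fin.cons t g) (fun i => Fin.cons (g i) (H i)))

/-- Moore–Penrose pseudoinverse of a real symmetric matrix (via the spectral theorem). -/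
def symPinv {n : ℕ} (A : Matrix (Fin n) (Fin n) ℝ) : Matrix (Fin n) (Fin n) ℝ :=
  if h : A.IsHermitian then
    (h.eigenvectorUnitary : Matrix (Fin n) (Fin n) ℝ) *
      Matrix.diagonal (fun i => (h.eigenvalues i)⁻¹) *
      star (h.eigenvectorUnitary : Matrix (Fin n) (Fin n) ℝ)
  else 0

/-- The set of minimizers of `ρ`. -/
def argminSet (ρ : ℝ → EReal) : Set ℝ := {t : ℝ | ∀ s : ℝ, ρ t ≤ ρ s}

/-- The RW-dual function `k̂(t) = inf_{γ ≥ 0} { ρ(γ−1) + γ λ_min(B(t)) }`. -/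
def khat {n : ℕ} (ρ : ℝ → EReal) (g : Fin n → ℝ) (H : Matrix (Fin n) (Fin n) ℝ) (t : ℝ) : EReal :=
  ⨅ γ : {γ : ℝ // 0 ≤ γ},
    (ρ ((γ : ℝ) - 1) + ((((γ : ℝ) * lambdaMin (Bmat g H t)) : ℝ) : EReal))


variable {ρ : ℝ → EReal}

lemma rho_ne_bot (h0 : ∀ t, 0 ≤ ρ t) (t : ℝ) : ρ t ≠ ⊥ :=
  fun h => by simpa [h] using h0 t

lemma rho_coe (h0 : ∀ t, 0 ≤ ρ t) {t : ℝ} (ht : ρ t ≠ ⊤) :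
    ρ t = (((ρ t).toReal : ℝ) : EReal) :=
  (EReal.coe_toReal ht (rho_ne_bot h0 t)).symm

lemma term_le_mconj (u t : ℝ) (ht : 0 ≤ t) :
    ((u * t : ℝ) : EReal) - ρ t ≤ mconj ρ u :=
  le_iSup (fun s : {t : ℝ // 0 ≤ t} => (((u * (s : ℝ) : ℝ) : EReal) - ρ s)) ⟨t, ht⟩

lemma mconj_nonneg (hz : ρ 0 = 0) (u : ℝ) : 0 ≤ mconj ρ u := by
  have := term_le_mconj (ρ := ρ) u 0 le_rfl
  simpa [hz] using this

lemma mconj_ne_top (h0 : ∀ t, 0 ≤ ρ t) (h2 : Assump2 ρ) (u : ℝ) : mconj ρ u ≠ ⊤ := by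
  obtain ⟨T, hT⟩ := eventually_atTop.1 (h2 (u + 1))
  set T' : ℝ := max T 0 with hT'
  set C : ℝ := max (|u| * T') 0 with hC
  have hub : mconj ρ u ≤ (C : EReal) := by
    apply iSup_le
    rintro ⟨t, ht⟩
    by_cases htT : t ≤ T'
    · have h1 : ((u * t : ℝ) : EReal) - ρ t ≤ ((u * t : ℝ) : EReal) - 0 :=
        EReal.sub_le_sub le_rfl (h0 t)
      have h2' : u * t ≤ C := by
        calc u * t ≤ |u| * t := by
              have := le_abs_self u
              nlinarith
          _ ≤ |u| * T' := by nlinarith [abs_nonneg u]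
          _ ≤ C := le_max_left _ _
      calc ((u * t : ℝ) : EReal) - ρ t ≤ ((u * t : ℝ) : EReal) := by
            simpa using h1
        _ ≤ (C : EReal) := by exact_mod_cast h2'
    · push_neg at htT
      have htT2 : T ≤ t := le_trans (le_max_left _ _) htT.le
      have hρt : (((u + 1) * t : ℝ) : EReal) ≤ ρ t := hT t htT2
      have ht0 : (0:ℝ) ≤ t := ht
      calc ((u * t : ℝ) : EReal) - ρ t ≤ ((u * t : ℝ) : EReal) - (((u + 1) * t : ℝ) : EReal) :=
            EReal.sub_le_sub le_rfl hρt
        _ = ((u * t - (u + 1) * t : ℝ) : EReal) := by rw [EReal.coe_sub]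
        _ ≤ (C : EReal) := by
            rw [EReal.coe_le_coe_iff]
            have hC0 : (0:ℝ) ≤ C := le_max_right _ _
            nlinarith
  exact ne_top_of_le_ne_top (EReal.coe_ne_top C) hub

lemma mconj_eq_coe (h0 : ∀ t, 0 ≤ ρ t) (hz : ρ 0 = 0) (h2 : Assump2 ρ) (u : ℝ) :
    mconj ρ u = ((mconjR ρ u : ℝ) : EReal) :=
  (EReal.coe_toReal (mconj_ne_top h0 h2 u)
    (ne_bot_of_le_ne_bot (by simp) (mconj_nonneg hz u))).symm

lemma mconjR_nonneg (h0 : ∀ t, 0 ≤ ρ t) (hz : ρ 0 = 0) (h2 : Assump2 ρ) (u : ℝ) :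
    0 ≤ mconjR ρ u := by
  have := mconj_nonneg hz u
  rw [mconj_eq_coe h0 hz h2 u] at this
  exact_mod_cast this

/-- (P1): every feasible `t` gives a lower bound. -/
lemma le_mconjR (h0 : ∀ t, 0 ≤ ρ t) (hz : ρ 0 = 0) (h2 : Assump2 ρ)
    (u : ℝ) {t : ℝ} (ht : 0 ≤ t) (htop : ρ t ≠ ⊤) :
    u * t - (ρ t).toReal ≤ mconjR ρ u := by
  have h := term_le_mconj (ρ := ρ) u t ht
  rw [mconj_eq_coe h0 hz h2 u, rho_coe h0 htop, ← EReal.coe_sub] at h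
  exact_mod_cast h

/-- approximation from the sup. -/
lemma exists_approx (h0 : ∀ t, 0 ≤ ρ t) (hz : ρ 0 = 0) (h2 : Assump2 ρ)
    (u ε : ℝ) (hε : 0 < ε) :
    ∃ t, 0 ≤ t ∧ ρ t ≠ ⊤ ∧ mconjR ρ u - ε < u * t - (ρ t).toReal := by
  have hlt : ((mconjR ρ u - ε : ℝ) : EReal) < mconj ρ u := by
    rw [mconj_eq_coe h0 hz h2 u]
    exact_mod_cast sub_lt_self _ hε
  rw [mconj, lt_iSup_iff] at hlt
  obtain ⟨⟨t, ht⟩, hlt⟩ := hlt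
  refine ⟨t, ht, ?_, ?_⟩
  · intro htop
    rw [htop, EReal.sub_top] at hlt
    exact absurd hlt (by simp)
  · have htop : ρ t ≠ ⊤ := by
      intro htop; rw [htop, EReal.sub_top] at hlt; exact absurd hlt (by simp)
    rw [rho_coe h0 htop, ← EReal.coe_sub] at hlt
    exact_mod_cast hlt

lemma lsc_le_of_tendsto (hlsc : LowerSemicontinuous ρ) (h0 : ∀ t, 0 ≤ ρ t)
    {t : ℕ → ℝ} {a c : ℝ} (hta : Tendsto t atTop (𝓝 a))
    (hS : ∀ k, ρ (t k) ≠ ⊤) (hrc : Tendsto (fun k => (ρ (t k)).toReal) atTop (𝓝 c)) :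
    ρ a ≤ (c : EReal) := by
  by_contra h
  push_neg at h
  obtain ⟨b, hb1, hb2⟩ := EReal.lt_iff_exists_real_btwn.1 h
  have hev : ∀ᶠ x in 𝓝 a, (b : EReal) < ρ x := hlsc a b hb2
  have hev2 : ∀ᶠ k in atTop, (b : EReal) < ρ (t k) := hta.eventually hev
  have hev3 : ∀ᶠ k in atTop, b ≤ (ρ (t k)).toReal := by
    filter_upwards [hev2] with k hk
    rw [rho_coe h0 (hS k)] at hk
    exact_mod_cast hk.le
  have : b ≤ c := ge_of_tendsto hrc hev3
  have : (c : EReal) < (c : EReal) := lt_of_lt_of_le hb1 (by exact_mod_cast this)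
  exact absurd this (lt_irrefl _)

lemma attain_of_seq (h0 : ∀ t, 0 ≤ ρ t) (hz : ρ 0 = 0) (hlsc : LowerSemicontinuous ρ)
    (h2 : Assump2 ρ) {u a : ℝ} {t : ℕ → ℝ}
    (hmem : ∀ k, 0 ≤ t k ∧ ρ (t k) ≠ ⊤) (hta : Tendsto t atTop (𝓝 a))
    (hval : Tendsto (fun k => (ρ (t k)).toReal) atTop (𝓝 (u * a - mconjR ρ u))) :
    0 ≤ a ∧ ρ a ≠ ⊤ ∧ u * a - (ρ a).toReal = mconjR ρ u := by
  have ha0 : 0 ≤ a := ge_of_tendsto hta (Eventually.of_forall fun k => (hmem k).1)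
  have hle : ρ a ≤ ((u * a - mconjR ρ u : ℝ) : EReal) :=
    lsc_le_of_tendsto hlsc h0 hta (fun k => (hmem k).2) hval
  have htop : ρ a ≠ ⊤ := ne_top_of_le_ne_top (EReal.coe_ne_top _) hle
  have hr : (ρ a).toReal ≤ u * a - mconjR ρ u := by
    have := EReal.toReal_le_toReal hle (rho_ne_bot h0 a) (EReal.coe_ne_top _)
    simpa only [EReal.toReal_coe] using this
  have hub := le_mconjR h0 hz h2 u ha0 htop
  exact ⟨ha0, htop, by linarith⟩

lemma exists_max (h0 : ∀ t, 0 ≤ ρ t) (hz : ρ 0 = 0) (hlsc : LowerSemicontinuous ρ)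
    (h2 : Assump2 ρ) (u : ℝ) (hu : 0 < u) :
    ∃ t, 0 ≤ t ∧ ρ t ≠ ⊤ ∧ u * t - (ρ t).toReal = mconjR ρ u := by
  have happrox : ∀ k : ℕ, ∃ t, 0 ≤ t ∧ ρ t ≠ ⊤ ∧
      mconjR ρ u - 1 / (k + 1) < u * t - (ρ t).toReal := by
    intro k
    exact exists_approx h0 hz h2 u (1 / (k + 1)) (by positivity)
  choose t ht0 httop htval using happrox
  have hub : ∀ k, u * t k - (ρ (t k)).toReal ≤ mconjR ρ u :=
    fun k => le_mconjR h0 hz h2 u (ht0 k) (httop k)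
  -- the values converge to the sup
  have hlow : Tendsto (fun k : ℕ => mconjR ρ u - 1 / (k + 1)) atTop (𝓝 (mconjR ρ u)) := by
    have : Tendsto (fun n : ℕ => 1 / ((n : ℝ) + 1)) atTop (𝓝 0) :=
      tendsto_one_div_add_atTop_nhds_zero_nat
    simpa using (tendsto_const_nhds (x := mconjR ρ u)).sub this
  have hval : Tendsto (fun k => u * t k - (ρ (t k)).toReal) atTop (𝓝 (mconjR ρ u)) :=
    tendsto_of_tendsto_of_tendsto_of_le_of_le hlow tendsto_const_nhds
      (fun k => (htval k).le) hub
  -- boundedness of the maximizing sequence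
  obtain ⟨T, hT⟩ := eventually_atTop.1 (h2 (u + 1))
  have hfnn : 0 ≤ mconjR ρ u := mconjR_nonneg h0 hz h2 u
  set B : ℝ := max T 2 with hB
  have hbd : ∀ k, t k ∈ Icc (0:ℝ) B := by
    intro k
    refine ⟨ht0 k, ?_⟩
    by_contra hgt
    push_neg at hgt
    have h1 : (((u + 1) * t k : ℝ) : EReal) ≤ ρ (t k) :=
      hT (t k) (le_trans (le_max_left _ _) hgt.le)
    have h2' : (u + 1) * t k ≤ (ρ (t k)).toReal := by
      rw [rho_coe h0 (httop k)] at h1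
      exact_mod_cast h1
    have h3 : u * t k - (ρ (t k)).toReal ≤ - t k := by linarith
    have h4 : mconjR ρ u - 1 / (k + 1) ≥ mconjR ρ u - 1 := by
      have h5 : (1:ℝ) / (k + 1) ≤ 1 := by
        rw [div_le_one (by positivity)]
        simp
      linarith
    have h6 : (2:ℝ) ≤ t k := lt_of_le_of_lt (le_max_right _ _) hgt |>.le
    have := htval k
    linarith
  obtain ⟨a, _, φ, hφ, hφa⟩ := tendsto_subseq_of_bounded (Metric.isBounded_Icc (0:ℝ) B)
    (x := t) hbd
  have hφat : Tendsto (t ∘ φ) atTop (𝓝 a) := hφa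
  have hvalφ : Tendsto (fun k => u * t (φ k) - (ρ (t (φ k))).toReal) atTop
      (𝓝 (mconjR ρ u)) := hval.comp hφ.tendsto_atTop
  have hrval : Tendsto (fun k => (ρ (t (φ k))).toReal) atTop
      (𝓝 (u * a - mconjR ρ u)) := by
    have hmul : Tendsto (fun k => u * t (φ k)) atTop (𝓝 (u * a)) :=
      (hφat.const_mul u)
    simpa using hmul.sub hvalφ
  obtain ⟨ha0, hatop, haval⟩ := attain_of_seq h0 hz hlsc h2
    (fun k => ⟨ht0 (φ k), httop (φ k)⟩) hφat hrval
  exact ⟨a, ha0, hatop, haval⟩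

lemma toReal_nn {x : EReal} (hx : 0 ≤ x) : 0 ≤ x.toReal := by
  rcases eq_or_ne x ⊤ with h | h
  · simp [h]
  · have := EReal.toReal_le_toReal hx (by simp) h
    simpa using this

lemma unique_max (h0 : ∀ t, 0 ≤ ρ t) (hz : ρ 0 = 0) (h2 : Assump2 ρ)
    (hconv : ∀ a b θ : ℝ, 0 ≤ θ → θ ≤ 1 →
      ρ (θ * a + (1 - θ) * b) ≤ (θ : EReal) * ρ a + ((1 - θ : ℝ) : EReal) * ρ b)
    (hstrict : ∀ a ∈ {t : ℝ | ρ t < ⊤ ∧ 0 < ρ t}, ∀ b ∈ {t : ℝ | ρ t < ⊤ ∧ 0 < ρ t},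
      a ≠ b → ∀ θ : ℝ, 0 < θ → θ < 1 →
        ρ (θ * a + (1 - θ) * b) < (θ : EReal) * ρ a + ((1 - θ : ℝ) : EReal) * ρ b)
    (u : ℝ) (hu : 0 < u) {t₁ t₂ : ℝ}
    (ha1 : 0 ≤ t₁ ∧ ρ t₁ ≠ ⊤ ∧ u * t₁ - (ρ t₁).toReal = mconjR ρ u)
    (ha2 : 0 ≤ t₂ ∧ ρ t₂ ≠ ⊤ ∧ u * t₂ - (ρ t₂).toReal = mconjR ρ u) :
    t₁ = t₂ := by
  obtain ⟨h10, h1top, h1v⟩ := ha1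
  obtain ⟨h20, h2top, h2v⟩ := ha2
  by_contra hne
  set r₁ : ℝ := (ρ t₁).toReal with hr₁
  set r₂ : ℝ := (ρ t₂).toReal with hr₂
  have hr1nn : 0 ≤ r₁ := toReal_nn (h0 t₁)
  have hr2nn : 0 ≤ r₂ := toReal_nn (h0 t₂)
  -- affine identity along the segment
  have aff : ∀ θ : ℝ, 0 ≤ θ → θ ≤ 1 →
      ρ (θ * t₁ + (1 - θ) * t₂) ≠ ⊤ ∧
      (ρ (θ * t₁ + (1 - θ) * t₂)).toReal = θ * r₁ + (1 - θ) * r₂ := by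
    intro θ hθ0 hθ1
    have hcv := hconv t₁ t₂ θ hθ0 hθ1
    rw [rho_coe h0 h1top, rho_coe h0 h2top, ← hr₁, ← hr₂, ← EReal.coe_mul,
      ← EReal.coe_mul, ← EReal.coe_add] at hcv
    have htop : ρ (θ * t₁ + (1 - θ) * t₂) ≠ ⊤ :=
      ne_top_of_le_ne_top (EReal.coe_ne_top _) hcv
    have hle : (ρ (θ * t₁ + (1 - θ) * t₂)).toReal ≤ θ * r₁ + (1 - θ) * r₂ := by
      have := EReal.toReal_le_toReal hcv (rho_ne_bot h0 _) (EReal.coe_ne_top _)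
      simpa only [EReal.toReal_coe] using this
    have htθ0 : 0 ≤ θ * t₁ + (1 - θ) * t₂ :=
      add_nonneg (mul_nonneg hθ0 h10) (mul_nonneg (by linarith) h20)
    have hge := le_mconjR h0 hz h2 u htθ0 htop
    have hkey : u * (θ * t₁ + (1 - θ) * t₂) - (θ * r₁ + (1 - θ) * r₂)
        = θ * (u * t₁ - r₁) + (1 - θ) * (u * t₂ - r₂) := by ring
    constructor
    · exact htop
    · nlinarith [hge, hle, hkey, h1v, h2v]
  obtain ⟨hatop, har⟩ := aff (3/4) (by norm_num) (by norm_num)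
  obtain ⟨hbtop, hbr⟩ := aff (1/4) (by norm_num) (by norm_num)
  obtain ⟨hmtop, hmr⟩ := aff (1/2) (by norm_num) (by norm_num)
  -- rule out the degenerate case r₁ = r₂ = 0
  by_cases hzero : r₁ = 0 ∧ r₂ = 0
  · apply hne
    have : u * t₁ = u * t₂ := by rw [hzero.1] at h1v; rw [hzero.2] at h2v; linarith
    exact mul_left_cancel₀ hu.ne' this
  · have hsum : 0 < r₁ + r₂ := by
      rcases (not_and_or.1 hzero) with h | h
      · have : 0 < r₁ := lt_of_le_of_ne hr1nn (Ne.symm h)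
        linarith
      · have : 0 < r₂ := lt_of_le_of_ne hr2nn (Ne.symm h)
        linarith
    set a : ℝ := 3/4 * t₁ + (1 - 3/4) * t₂ with hadef
    set b : ℝ := 1/4 * t₁ + (1 - 1/4) * t₂ with hbdef
    have hra : 0 < (3:ℝ)/4 * r₁ + (1 - 3/4) * r₂ := by nlinarith
    have hrb : 0 < (1:ℝ)/4 * r₁ + (1 - 1/4) * r₂ := by nlinarith
    have haS : a ∈ {t : ℝ | ρ t < ⊤ ∧ 0 < ρ t} := by
      refine ⟨lt_top_iff_ne_top.2 hatop, ?_⟩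
      rw [rho_coe h0 hatop, har]
      exact_mod_cast hra
    have hbS : b ∈ {t : ℝ | ρ t < ⊤ ∧ 0 < ρ t} := by
      refine ⟨lt_top_iff_ne_top.2 hbtop, ?_⟩
      rw [rho_coe h0 hbtop, hbr]
      exact_mod_cast hrb
    have hab : a ≠ b := by
      rw [hadef, hbdef]
      intro h
      apply hne
      linarith
    have hs := hstrict a haS b hbS hab (1/2) (by norm_num) (by norm_num)
    have hmid : (1:ℝ)/2 * a + (1 - 1/2) * b = 1/2 * t₁ + (1 - 1/2) * t₂ := by
      rw [hadef, hbdef]; ring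
    rw [hmid, rho_coe h0 hmtop, hmr, rho_coe h0 hatop, har, rho_coe h0 hbtop, hbr,
      ← EReal.coe_mul, ← EReal.coe_mul, ← EReal.coe_add, EReal.coe_lt_coe_iff] at hs
    nlinarith [hs]

set_option maxHeartbeats 1000000 in
theorem stmt19_aux (ρ : ℝ → EReal)
    (h0 : ∀ t, 0 ≤ ρ t) (hz : ρ 0 = 0) (hlsc : LowerSemicontinuous ρ)
    (hconv : ∀ a b θ : ℝ, 0 ≤ θ → θ ≤ 1 →
      ρ (θ * a + (1 - θ) * b) ≤ (θ : EReal) * ρ a + ((1 - θ : ℝ) : EReal) * ρ b)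
    (h2 : Assump2 ρ)
    (hstrict : ∀ a ∈ {t : ℝ | ρ t < ⊤ ∧ 0 < ρ t}, ∀ b ∈ {t : ℝ | ρ t < ⊤ ∧ 0 < ρ t},
      a ≠ b → ∀ θ : ℝ, 0 < θ → θ < 1 →
        ρ (θ * a + (1 - θ) * b) < (θ : EReal) * ρ a + ((1 - θ : ℝ) : EReal) * ρ b) :
    ∀ u : ℝ, 0 < u → DifferentiableAt ℝ (mconjR ρ) u := by
  intro u hu
  have hex : ∀ v : ℝ, ∃ t, 0 ≤ t ∧
      (0 < v → ρ t ≠ ⊤ ∧ v * t - (ρ t).toReal = mconjR ρ v) := by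
    intro v
    by_cases hv : 0 < v
    · obtain ⟨t, ht1, ht2, ht3⟩ := exists_max h0 hz hlsc h2 v hv
      exact ⟨t, ht1, fun _ => ⟨ht2, ht3⟩⟩
    · exact ⟨0, le_rfl, fun h => absurd h hv⟩
  choose T hT0 hTP using hex
  have hTtop : ∀ v, 0 < v → ρ (T v) ≠ ⊤ := fun v hv => (hTP v hv).1
  have hTval : ∀ v, 0 < v → v * T v - (ρ (T v)).toReal = mconjR ρ v :=
    fun v hv => (hTP v hv).2
  have hTattain : ∀ v, 0 < v →
      0 ≤ T v ∧ ρ (T v) ≠ ⊤ ∧ v * T v - (ρ (T v)).toReal = mconjR ρ v :=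
    fun v hv => ⟨hT0 v, hTtop v hv, hTval v hv⟩
  -- subgradient inequality
  have hsub : ∀ v w : ℝ, 0 < v → mconjR ρ v + T v * (w - v) ≤ mconjR ρ w := by
    intro v w hv
    have h := le_mconjR h0 hz h2 w (hT0 v) (hTtop v hv)
    have hveq := hTval v hv
    nlinarith [h, hveq]
  -- monotonicity of the maximizer
  have hmono : ∀ v w : ℝ, 0 < v → v ≤ w → T v ≤ T w := by
    intro v w hv hvw
    rcases eq_or_lt_of_le hvw with rfl | hlt
    · exact le_rfl
    · have h1 := hsub v w hv
      have h2' := hsub w v (lt_trans hv hlt)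
      nlinarith
  -- right continuity at u
  have hright : ∀ ε : ℝ, 0 < ε → ∃ δ : ℝ, 0 < δ ∧ T (u + δ) < T u + ε := by
    intro ε hε
    by_contra hcon
    push_neg at hcon
    set v : ℕ → ℝ := fun k => u + 1 / (k + 1) with hvdef
    have hvgt : ∀ k : ℕ, u < v k := by
      intro k
      have : (0:ℝ) < 1 / (k + 1) := by positivity
      simp only [hvdef]; linarith
    have hvpos : ∀ k, 0 < v k := fun k => lt_trans hu (hvgt k)
    have hanti : Antitone (fun k => T (v k)) := by
      intro k l hkl
      apply hmono (v l) (v k) (hvpos l)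
      have hk : ((k:ℝ)) + 1 ≤ (l:ℝ) + 1 := by
        have : ((k:ℝ)) ≤ l := Nat.cast_le.2 hkl
        linarith
      have h1 : (1:ℝ) / (l + 1) ≤ 1 / (k + 1) :=
        one_div_le_one_div_of_le (by positivity) hk
      simp only [hvdef]
      linarith
    have hbdd : BddBelow (range fun k => T (v k)) := by
      refine ⟨T u, ?_⟩
      rintro x ⟨k, rfl⟩
      exact hmono u (v k) hu (hvgt k).le
    have htL : Tendsto (fun k => T (v k)) atTop (𝓝 (⨅ k, T (v k))) :=
      tendsto_atTop_ciInf hanti hbdd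
    have hLge : T u + ε ≤ ⨅ k, T (v k) := by
      apply le_ciInf
      intro k
      have := hcon (1 / ((k:ℝ) + 1)) (by positivity)
      simpa [hvdef] using this
    have hvu : Tendsto v atTop (𝓝 u) := by
      have : Tendsto (fun n : ℕ => 1 / ((n : ℝ) + 1)) atTop (𝓝 0) :=
        tendsto_one_div_add_atTop_nhds_zero_nat
      simpa [hvdef] using (tendsto_const_nhds (x := u)).add this
    have hfv : Tendsto (fun k => mconjR ρ (v k)) atTop (𝓝 (mconjR ρ u)) := by
      have hlow : Tendsto (fun k => mconjR ρ u + T u * (v k - u)) atTop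
          (𝓝 (mconjR ρ u)) := by
        have : Tendsto (fun k => T u * (v k - u)) atTop (𝓝 0) := by
          simpa using ((hvu.sub_const u).const_mul (T u))
        simpa using (tendsto_const_nhds (x := mconjR ρ u)).add this
      have hhigh : Tendsto (fun k => mconjR ρ u + T (v 0) * (v k - u)) atTop
          (𝓝 (mconjR ρ u)) := by
        have : Tendsto (fun k => T (v 0) * (v k - u)) atTop (𝓝 0) := by
          simpa using ((hvu.sub_const u).const_mul (T (v 0)))
        simpa using (tendsto_const_nhds (x := mconjR ρ u)).add this
      apply tendsto_of_tendsto_of_tendsto_of_le_of_le hlow hhigh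
      · intro k
        dsimp only
        linarith [hsub u (v k) hu]
      · intro k
        dsimp only
        have hA := le_mconjR h0 hz h2 u (hT0 (v k)) (hTtop (v k) (hvpos k))
        have hB := hTval (v k) (hvpos k)
        have hC : T (v k) ≤ T (v 0) := hanti (Nat.zero_le k)
        have hD : (0:ℝ) ≤ v k - u := by linarith [hvgt k]
        have hE := mul_le_mul_of_nonneg_right hC hD
        linarith [hA, hB, hE]
    have hrt : Tendsto (fun k => (ρ (T (v k))).toReal) atTop
        (𝓝 (u * (⨅ k, T (v k)) - mconjR ρ u)) := by
      have h1 : Tendsto (fun k => v k * T (v k) - mconjR ρ (v k)) atTop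
          (𝓝 (u * (⨅ k, T (v k)) - mconjR ρ u)) := (hvu.mul htL).sub hfv
      apply h1.congr
      intro k
      have := hTval (v k) (hvpos k)
      linarith
    obtain ⟨hL0, hLtop, hLval⟩ := attain_of_seq h0 hz hlsc h2
      (fun k => ⟨hT0 (v k), hTtop (v k) (hvpos k)⟩) htL hrt
    have hLeq : (⨅ k, T (v k)) = T u := unique_max h0 hz h2 hconv hstrict u hu
      ⟨hL0, hLtop, hLval⟩ (hTattain u hu)
    linarith
  -- left continuity at u
  have hleft : ∀ ε : ℝ, 0 < ε → ∃ δ : ℝ, 0 < δ ∧ δ < u ∧ T u - ε < T (u - δ) := by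
    intro ε hε
    by_contra hcon
    push_neg at hcon
    set w : ℕ → ℝ := fun k => u - u / 2 * (1 / (k + 1)) with hwdef
    have hδpos : ∀ k : ℕ, (0:ℝ) < u / 2 * (1 / (k + 1)) := by intro k; positivity
    have hδlt : ∀ k : ℕ, u / 2 * (1 / (k + 1)) < u := by
      intro k
      have h1 : (1:ℝ) / (k + 1) ≤ 1 := by
        rw [div_le_one (by positivity)]; simp
      nlinarith
    have hwlt : ∀ k, w k < u := by intro k; simp only [hwdef]; linarith [hδpos k]
    have hwpos : ∀ k, 0 < w k := by intro k; simp only [hwdef]; linarith [hδlt k]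
    have hmono' : Monotone (fun k => T (w k)) := by
      intro k l hkl
      apply hmono (w k) (w l) (hwpos k)
      have hk : ((k:ℝ)) + 1 ≤ (l:ℝ) + 1 := by
        have : ((k:ℝ)) ≤ l := Nat.cast_le.2 hkl
        linarith
      have h1 : (1:ℝ) / (l + 1) ≤ 1 / (k + 1) :=
        one_div_le_one_div_of_le (by positivity) hk
      simp only [hwdef]
      nlinarith
    have hbdd : BddAbove (range fun k => T (w k)) := by
      refine ⟨T u, ?_⟩
      rintro x ⟨k, rfl⟩
      exact hmono (w k) u (hwpos k) (hwlt k).le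
    have htL : Tendsto (fun k => T (w k)) atTop (𝓝 (⨆ k, T (w k))) :=
      tendsto_atTop_ciSup hmono' hbdd
    have hLle : (⨆ k, T (w k)) ≤ T u - ε := by
      apply ciSup_le
      intro k
      have := hcon (u / 2 * (1 / ((k:ℝ) + 1))) (hδpos k) (hδlt k)
      simpa [hwdef] using this
    have hwu : Tendsto w atTop (𝓝 u) := by
      have h1 : Tendsto (fun n : ℕ => 1 / ((n : ℝ) + 1)) atTop (𝓝 0) :=
        tendsto_one_div_add_atTop_nhds_zero_nat
      have h2' : Tendsto (fun k : ℕ => u / 2 * (1 / ((k:ℝ) + 1))) atTop (𝓝 0) := by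
        simpa using h1.const_mul (u / 2)
      simpa [hwdef] using (tendsto_const_nhds (x := u)).sub h2'
    have hfw : Tendsto (fun k => mconjR ρ (w k)) atTop (𝓝 (mconjR ρ u)) := by
      have hlow : Tendsto (fun k => mconjR ρ u + T u * (w k - u)) atTop
          (𝓝 (mconjR ρ u)) := by
        have : Tendsto (fun k => T u * (w k - u)) atTop (𝓝 0) := by
          simpa using ((hwu.sub_const u).const_mul (T u))
        simpa using (tendsto_const_nhds (x := mconjR ρ u)).add this
      apply tendsto_of_tendsto_of_tendsto_of_le_of_le hlow tendsto_const_nhds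
      · intro k
        dsimp only
        linarith [hsub u (w k) hu]
      · intro k
        dsimp only
        have hA := le_mconjR h0 hz h2 u (hT0 (w k)) (hTtop (w k) (hwpos k))
        have hB := hTval (w k) (hwpos k)
        have hC : 0 ≤ T (w k) := hT0 (w k)
        have hD : w k ≤ u := (hwlt k).le
        have hE := mul_le_mul_of_nonneg_left hD hC
        linarith [hA, hB, hE]
    have hrt : Tendsto (fun k => (ρ (T (w k))).toReal) atTop
        (𝓝 (u * (⨆ k, T (w k)) - mconjR ρ u)) := by
      have h1 : Tendsto (fun k => w k * T (w k) - mconjR ρ (w k)) atTop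
          (𝓝 (u * (⨆ k, T (w k)) - mconjR ρ u)) := (hwu.mul htL).sub hfw
      apply h1.congr
      intro k
      have := hTval (w k) (hwpos k)
      linarith
    obtain ⟨hL0, hLtop, hLval⟩ := attain_of_seq h0 hz hlsc h2
      (fun k => ⟨hT0 (w k), hTtop (w k) (hwpos k)⟩) htL hrt
    have hLeq : (⨆ k, T (w k)) = T u := unique_max h0 hz h2 hconv hstrict u hu
      ⟨hL0, hLtop, hLval⟩ (hTattain u hu)
    linarith
  -- the slope converges to T u
  have hslope : Tendsto (slope (mconjR ρ) u) (𝓝[≠] u) (𝓝 (T u)) := by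
    rw [Metric.tendsto_nhdsWithin_nhds]
    intro ε hε
    obtain ⟨δ₁, hδ₁, hδ₁'⟩ := hright (ε / 2) (by linarith)
    obtain ⟨δ₂, hδ₂, hδ₂u, hδ₂'⟩ := hleft (ε / 2) (by linarith)
    refine ⟨min δ₁ δ₂, by positivity, ?_⟩
    intro x hvne hvd
    rw [Real.dist_eq] at hvd ⊢
    have habs := abs_lt.1 hvd
    have hv1 : x < u + δ₁ := by
      have := min_le_left δ₁ δ₂
      rcases habs with ⟨h1', h2''⟩
      linarith
    have hv2 : u - δ₂ < x := by
      have := min_le_right δ₁ δ₂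
      rcases habs with ⟨h1', h2''⟩
      linarith
    have hv0 : 0 < x := by linarith
    have hTv1 : T x ≤ T (u + δ₁) := hmono x (u + δ₁) hv0 hv1.le
    have hTv2 : T (u - δ₂) ≤ T x := hmono (u - δ₂) x (by linarith) hv2.le
    have hvneu : x ≠ u := hvne
    have hkey : slope (mconjR ρ) u x * (x - u) = mconjR ρ x - mconjR ρ u := by
      rw [slope_def_field]
      exact div_mul_cancel₀ _ (sub_ne_zero.2 hvneu)
    have hA : T u * (x - u) ≤ slope (mconjR ρ) u x * (x - u) := by
      have := hsub u x hu
      linarith [hkey]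
    have hB : slope (mconjR ρ) u x * (x - u) ≤ T x * (x - u) := by
      have := hsub x u hv0
      linarith [hkey]
    rcases lt_or_gt_of_ne hvneu with hlt | hgt
    · have hsu : slope (mconjR ρ) u x ≤ T u := by
        refine le_of_mul_le_mul_right ?_ (show (0:ℝ) < u - x by linarith)
        linarith [hA]
      have hsv : T x ≤ slope (mconjR ρ) u x := by
        refine le_of_mul_le_mul_right ?_ (show (0:ℝ) < u - x by linarith)
        linarith [hB]
      rw [abs_lt]
      constructor <;> linarith [hTv2, hδ₂', hsu, hsv]
    · have hsu : T u ≤ slope (mconjR ρ) u x :=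
        le_of_mul_le_mul_right hA (by linarith)
      have hsv : slope (mconjR ρ) u x ≤ T x :=
        le_of_mul_le_mul_right hB (by linarith)
      rw [abs_lt]
      constructor <;> linarith [hTv1, hδ₁', hsu, hsv]
  have hderiv : HasDerivAt (mconjR ρ) (T u) u := hasDerivAt_iff_tendsto_slope.2 hslope
  exact hderiv.differentiableAt


theorem stmt19 (ρ : ℝ → EReal) (hρ : RhoBasic ρ) (h1 : Assump1 ρ) (h2 : Assump2 ρ)
    (hstrict : ∀ a ∈ {t : ℝ | ρ t < ⊤ ∧ 0 < ρ t}, ∀ b ∈ {t : ℝ | ρ t < ⊤ ∧ 0 < ρ t},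
      a ≠ b → ∀ θ : ℝ, 0 < θ → θ < 1 →
        ρ (θ * a + (1 - θ) * b) < (θ : EReal) * ρ a + ((1 - θ : ℝ) : EReal) * ρ b) :
    ∀ u : ℝ, 0 < u → DifferentiableAt ℝ (mconjR ρ) u := by
  obtain ⟨h0, hz, hlsc, hconv⟩ := hρ
  exact stmt19_aux ρ h0 hz hlsc hconv h2 hstrict

end
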